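/- arXiv:2501.04253 — 4 statements merged into one kernel-verified Lean document; each statement's English description precedes it below -/
import Mathlib

section
/- Let α ≥ 1 be a positive integer and β > 0 a real number. Let c' : Fin n → ℕ → ℝ be cost functions such that each c' j is non-decreasing and c' j (α * t) = β * c j t for every job j and every time t ∈ ℕ. If S is an optimal schedule for the instance with processing times p, release times r, and costs c, then the schedule j ↦ α * S j is an optimal schedule for the scaled instance with processing times j ↦ α * p j, release times j ↦ α * r j, and costs c'. -/
/-- A schedule `S` is feasible for processing times `p` and release times `r`:
every job starts no earlier than its release time, and no two jobs overlap. -/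
def Feasible {n : ℕ} (p r S : Fin n → ℕ) : Prop :=
  (∀ j, r j ≤ S j) ∧ ∀ i j, i ≠ j → S i + p i ≤ S j ∨ S j + p j ≤ S i

/-- A schedule `S` is optimal for `(p, r, c)`: it is feasible and its total
starting cost is no larger than that of any feasible schedule. -/
def Optimal {n : ℕ} (p r : Fin n → ℕ) (c : Fin n → ℕ → ℝ) (S : Fin n → ℕ) : Prop :=
  Feasible p r S ∧ ∀ S', Feasible p r S' → ∑ j, c j (S j) ≤ ∑ j, c j (S' j)

/-!
Scaling a feasible schedule by `α` keeps it feasible for the scaled instance. Conversely,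
rounding every start time of a feasible schedule of the scaled instance down to a multiple
of `α` (i.e. taking `S' j / α`) gives a feasible schedule of the original instance, whose
scaled version starts no later than `S'` and hence, the costs `c'` being monotone, costs
no more. Since `c' j (α t) = β c j t` with `β > 0`, optimality of `S` transfers.
-/

namespace Feasible

variable {n : ℕ} {p r S : Fin n → ℕ}

theorem mul_left (α : ℕ) (hS : Feasible p r S) :
    Feasible (fun j => α * p j) (fun j => α * r j) (fun j => α * S j) := by
  refine ⟨fun j => Nat.mul_le_mul_left α (hS.1 j), fun i j hij => ?_⟩
  simp only [← Nat.mul_add]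
  exact (hS.2 i j hij).imp (Nat.mul_le_mul_left α) (Nat.mul_le_mul_left α)

theorem div_of_mul_left {α : ℕ} (hα : 0 < α)
    (hS : Feasible (fun j => α * p j) (fun j => α * r j) S) :
    Feasible p r (fun j => S j / α) := by
  have div_add_le {x y q : ℕ} (h : x + α * q ≤ y) : x / α + q ≤ y / α := by
    rw [← Nat.add_mul_div_right x q hα, Nat.mul_comm q α]
    exact Nat.div_le_div_right h
  refine ⟨fun j => (Nat.le_div_iff_mul_le hα).2 ?_, fun i j hij => ?_⟩
  · simpa only [Nat.mul_comm] using hS.1 j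
  · exact (hS.2 i j hij).imp div_add_le div_add_le

end Feasible

theorem scaled_schedule_optimal_general {n : ℕ} (p r : Fin n → ℕ)
    (c c' : Fin n → ℕ → ℝ) (α : ℕ) (hα : 1 ≤ α)
    (β : ℝ) (hβ : 0 < β) (hmono : ∀ j, Monotone (c' j))
    (hcc' : ∀ j t, c' j (α * t) = β * c j t) (S : Fin n → ℕ)
    (hopt : Optimal p r c S) :
    Optimal (fun j => α * p j) (fun j => α * r j) c' (fun j => α * S j) := by
  have scaled_cost (T : Fin n → ℕ) : ∑ j, c' j (α * T j) = β * ∑ j, c j (T j) := by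
    simp only [hcc', Finset.mul_sum]
  refine ⟨hopt.1.mul_left α, fun S' hS' => ?_⟩
  let T : Fin n → ℕ := fun j => S' j / α
  calc ∑ j, c' j (α * S j) = β * ∑ j, c j (S j) := scaled_cost S
    _ ≤ β * ∑ j, c j (T j) :=
      mul_le_mul_of_nonneg_left (hopt.2 T (hS'.div_of_mul_left hα)) hβ.le
    _ = ∑ j, c' j (α * T j) := (scaled_cost T).symm
    _ ≤ ∑ j, c' j (S' j) :=
      Finset.sum_le_sum fun j _ => hmono j (Nat.mul_div_le (S' j) α)

/-- Scaling an instance by `α` (with costs satisfying `c' j (α t) = β · c j t`,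
each `c' j` non-decreasing) turns an optimal schedule `S` into the optimal
schedule `j ↦ α * S j` of the scaled instance. -/
theorem scaled_schedule_optimal {n : ℕ} (hn : 1 ≤ n) (p r : Fin n → ℕ)
    (hp : ∀ j, 0 < p j) (c c' : Fin n → ℕ → ℝ) (α : ℕ) (hα : 1 ≤ α)
    (β : ℝ) (hβ : 0 < β) (hmono : ∀ j, Monotone (c' j))
    (hcc' : ∀ j t, c' j (α * t) = β * c j t) (S : Fin n → ℕ)
    (hopt : Optimal p r c S) :
    Optimal (fun j => α * p j) (fun j => α * r j) c' (fun j => α * S j) :=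
  scaled_schedule_optimal_general p r c c' α hα β hβ hmono hcc' S hopt
end

section
/- Let α ≥ 1 be a positive integer such that α ∣ p j and α ∣ r j for every job j. Then for every schedule S that is feasible for (p, r), there exists a schedule S' that is feasible for (p, r) with α ∣ S' j and S' j ≤ S j for every job j. (Consequently, if every cost function c j is non-decreasing, the instance always admits an α-divisible feasible schedule whose total cost is no larger.) -/
/-!
Round every starting time down to a multiple of `α`. Rounding down is monotone and fixes
multiples of `α`, so any bound `m ≤ x` with `α ∣ m` survives as `m ≤ α * (x / α)`. Release
times are such `m`, and so are the completion times `α * (S i / α) + p i` of rounded jobs,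
which makes every inequality in `Feasible` survive the rounding.
-/

theorem Nat.le_mul_div_of_dvd_of_le {a m x : ℕ} (hm : a ∣ m) (h : m ≤ x) :
    m ≤ a * (x / a) :=
  calc m = a * (m / a) := (Nat.mul_div_cancel' hm).symm
    _ ≤ a * (x / a) := Nat.mul_le_mul_left a (Nat.div_le_div_right h)

theorem Feasible.mul_div {n : ℕ} {p r S : Fin n → ℕ} (hS : Feasible p r S) {α : ℕ}
    (hdp : ∀ j, α ∣ p j) (hdr : ∀ j, α ∣ r j) :
    Feasible p r fun j => α * (S j / α) := by
  have precedes {i j : Fin n} (h : S i + p i ≤ S j) :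
      α * (S i / α) + p i ≤ α * (S j / α) :=
    Nat.le_mul_div_of_dvd_of_le ((Dvd.intro _ rfl).add (hdp i))
      ((Nat.add_le_add_right (Nat.mul_div_le (S i) α) _).trans h)
  refine ⟨fun j => Nat.le_mul_div_of_dvd_of_le (hdr j) (hS.1 j), fun i j hij => ?_⟩
  exact (hS.2 i j hij).imp precedes precedes

theorem exists_divisible_feasible_le_general {n : ℕ} (p r : Fin n → ℕ)
    (α : ℕ)
    (hdp : ∀ j, α ∣ p j) (hdr : ∀ j, α ∣ r j) :
    ∀ S : Fin n → ℕ, Feasible p r S →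
      ∃ S' : Fin n → ℕ, Feasible p r S' ∧ (∀ j, α ∣ S' j) ∧ (∀ j, S' j ≤ S j) ∧
        ∀ c : Fin n → ℕ → ℝ, (∀ j, Monotone (c j)) →
          ∑ j, c j (S' j) ≤ ∑ j, c j (S j) := by
  intro S hS
  have hle : ∀ j, α * (S j / α) ≤ S j := fun j => Nat.mul_div_le (S j) α
  refine ⟨fun j => α * (S j / α), hS.mul_div hdp hdr, fun j => Dvd.intro _ rfl, hle, ?_⟩
  intro c hc
  exact Finset.sum_le_sum fun j _ => hc j (hle j)

/-- If `α` divides all processing and release times, then every feasible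
schedule can be replaced by an `α`-divisible feasible schedule that starts
every job no later; consequently if each cost function is non-decreasing,
the `α`-divisible schedule has total cost no larger. -/
theorem exists_divisible_feasible_le {n : ℕ} (hn : 1 ≤ n) (p r : Fin n → ℕ)
    (hp : ∀ j, 0 < p j) (α : ℕ) (hα : 1 ≤ α)
    (hdp : ∀ j, α ∣ p j) (hdr : ∀ j, α ∣ r j) :
    ∀ S : Fin n → ℕ, Feasible p r S →
      ∃ S' : Fin n → ℕ, Feasible p r S' ∧ (∀ j, α ∣ S' j) ∧ (∀ j, S' j ≤ S j) ∧
        ∀ c : Fin n → ℕ → ℝ, (∀ j, Monotone (c j)) →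
          ∑ j, c j (S' j) ≤ ∑ j, c j (S j) :=
  exists_divisible_feasible_le_general p r α hdp hdr
end

section
/- Let S be a schedule feasible for (p, r), and let σ : Fin n ≃ Fin n be a permutation such that k ↦ S (σ k) is strictly increasing in the position k. Then the list schedule L associated with σ satisfies L j ≤ S j for every job j (left-shifting a feasible schedule in its own processing order never delays any job). -/
theorem Feasible.add_le_of_lt {n : ℕ} {p r S : Fin n → ℕ} (hS : Feasible p r S) {i j : Fin n}
    (hij : S i < S j) : S i + p i ≤ S j :=
  (hS.2 i j fun h => (h ▸ hij).false).resolve_right (by omega)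

theorem list_schedule_le_of_feasible_general {n : ℕ} (hn : 1 ≤ n) (p r : Fin n → ℕ)
    (S : Fin n → ℕ) (hS : Feasible p r S)
    (σ : Equiv.Perm (Fin n)) (hσ : StrictMono (fun k : Fin n => S (σ k)))
    (L : Fin n → ℕ)
    (hL0 : L (σ ⟨0, hn⟩) = r (σ ⟨0, hn⟩))
    (hLs : ∀ (k : ℕ) (h : k + 1 < n),
      L (σ ⟨k + 1, h⟩) =
        max (r (σ ⟨k + 1, h⟩))
          (L (σ ⟨k, Nat.lt_of_succ_lt h⟩) + p (σ ⟨k, Nat.lt_of_succ_lt h⟩))) :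
    ∀ j, L j ≤ S j := by
  have le_at_position : ∀ (k : ℕ) (h : k < n), L (σ ⟨k, h⟩) ≤ S (σ ⟨k, h⟩) := by
    intro k
    induction k with
    | zero => intro h; exact hL0 ▸ hS.1 _
    | succ k ih =>
      intro h
      rw [hLs k h]
      refine max_le (hS.1 _) ?_
      calc L (σ ⟨k, _⟩) + p (σ ⟨k, _⟩) ≤ S (σ ⟨k, _⟩) + p (σ ⟨k, _⟩) := by gcongr; exact ih _
        _ ≤ S (σ ⟨k + 1, h⟩) := hS.add_le_of_lt (hσ (Fin.mk_lt_mk.2 k.lt_succ_self))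
  intro j
  simpa using le_at_position _ (σ.symm j).isLt

/-- Left-shifting a feasible schedule in its own processing order never delays
any job: if `σ` lists the jobs of a feasible schedule `S` in increasing order
of starting times, then the list schedule `L` of `σ` satisfies `L j ≤ S j`. -/
theorem list_schedule_le_of_feasible {n : ℕ} (hn : 1 ≤ n) (p r : Fin n → ℕ)
    (hp : ∀ j, 0 < p j) (S : Fin n → ℕ) (hS : Feasible p r S)
    (σ : Equiv.Perm (Fin n)) (hσ : StrictMono (fun k : Fin n => S (σ k)))
    (L : Fin n → ℕ)
    (hL0 : L (σ ⟨0, hn⟩) = r (σ ⟨0, hn⟩))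
    (hLs : ∀ (k : ℕ) (h : k + 1 < n),
      L (σ ⟨k + 1, h⟩) =
        max (r (σ ⟨k + 1, h⟩))
          (L (σ ⟨k, Nat.lt_of_succ_lt h⟩) + p (σ ⟨k, Nat.lt_of_succ_lt h⟩))) :
    ∀ j, L j ≤ S j :=
  list_schedule_le_of_feasible_general hn p r S hS σ hσ L hL0 hLs
end

section
/- Let ω : Fin n → ℝ be injective, define S̃ j = ∑_{j' ≠ j with ω j' < ω j} p j' (the sum of the processing times of all jobs with strictly smaller priority value), and define the pushback Δ j = max(0, max_{j' with ω j' ≤ ω j} ((r j' : ℤ) - S̃ j')), a nonnegative integer. Then the schedule S j = S̃ j + Δ j is feasible for (p, r): S j ≥ r j for every job j, and for all i ≠ j, either S i + p i ≤ S j or S j + p j ≤ S i. -/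
open Finset

section Priority

variable {ι β : Type*} [Fintype ι] [Preorder β]

def tightStart [DecidableEq ι] [DecidableRel (α := β) (· < ·)] (ω : ι → β) (p : ι → ℕ)
    (j : ι) : ℕ :=
  ∑ j' ∈ univ.filter (fun j' => j' ≠ j ∧ ω j' < ω j), p j'

theorem tightStart_add_le_of_lt [DecidableEq ι] [DecidableRel (α := β) (· < ·)]
    (ω : ι → β) (p : ι → ℕ) {a b : ι} (hab : ω a < ω b) :
    tightStart ω p a + p a ≤ tightStart ω p b := by
  have ha : a ∉ univ.filter (fun j' => j' ≠ a ∧ ω j' < ω a) := by simp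
  have hsub : insert a (univ.filter (fun j' => j' ≠ a ∧ ω j' < ω a)) ⊆
      univ.filter (fun j' => j' ≠ b ∧ ω j' < ω b) := by
    intro x hx
    simp only [mem_insert, mem_filter, mem_univ, true_and] at hx ⊢
    rcases hx with rfl | ⟨-, hxa⟩
    · exact ⟨fun h => (h ▸ hab).false, hab⟩
    · exact ⟨fun h => (h ▸ hxa.trans hab).false, hxa.trans hab⟩
  unfold tightStart
  rw [add_comm, ← sum_insert ha]
  exact sum_le_sum_of_subset hsub

variable {α : Type*} [SemilatticeSup α]

def prefixSup [DecidableRel (α := β) (· ≤ ·)] (ω : ι → β) (g : ι → α) (j : ι) : α :=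
  (univ.filter (fun j' => ω j' ≤ ω j)).sup' ⟨j, mem_filter.mpr ⟨mem_univ j, le_refl (ω j)⟩⟩ g

theorem le_prefixSup [DecidableRel (α := β) (· ≤ ·)] (ω : ι → β) (g : ι → α) (j : ι) :
    g j ≤ prefixSup ω g j :=
  le_sup' g (by simp)

theorem prefixSup_mono [DecidableRel (α := β) (· ≤ ·)] (ω : ι → β) (g : ι → α) {a b : ι}
    (hab : ω a ≤ ω b) : prefixSup ω g a ≤ prefixSup ω g b :=
  sup'_mono g (fun x hx => by
    simp only [mem_filter, mem_univ, true_and] at hx ⊢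
    exact hx.trans hab) _

end Priority

theorem feasible_of_lt_imp_add_le {n : ℕ} {β : Type*} [LinearOrder β] {p r S : Fin n → ℕ}
    {ω : Fin n → β} (hω : Function.Injective ω) (hr : ∀ j, r j ≤ S j)
    (hsep : ∀ a b, ω a < ω b → S a + p a ≤ S b) : Feasible p r S := by
  refine ⟨hr, fun i j hij => ?_⟩
  rcases (hω.ne hij).lt_or_gt with h | h
  · exact .inl (hsep i j h)
  · exact .inr (hsep j i h)

theorem pushback_schedule_feasible_general {n : ℕ} (p r : Fin n → ℕ)
    (ω : Fin n → ℝ) (hω : Function.Injective ω)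
    (S' : Fin n → ℕ) (Δ : Fin n → ℤ) (S : Fin n → ℕ)
    (hS' : ∀ j, S' j =
      ∑ j' ∈ Finset.univ.filter (fun j' => j' ≠ j ∧ ω j' < ω j), p j')
    (hΔ : ∀ j, Δ j = max 0
      ((Finset.univ.filter (fun j' => ω j' ≤ ω j)).sup'
        ⟨j, Finset.mem_filter.mpr ⟨Finset.mem_univ j, le_refl (ω j)⟩⟩
        (fun j' => (r j' : ℤ) - (S' j' : ℤ))))
    (hS : ∀ j, (S j : ℤ) = (S' j : ℤ) + Δ j) :
    Feasible p r S := by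
  set g : Fin n → ℤ := fun j => r j - S' j
  have hΔ_sup : ∀ j, Δ j = max 0 (prefixSup ω g j) := hΔ
  have hS'_tight : ∀ j, S' j = tightStart ω p j := hS'
  refine feasible_of_lt_imp_add_le hω (fun j => ?_) (fun a b hab => ?_)
  · have hrel : g j ≤ Δ j := (hΔ_sup j).symm ▸ le_max_of_le_right (le_prefixSup ω g j)
    have hgj : g j = r j - S' j := rfl
    have := hS j
    omega
  · have hsep : S' a + p a ≤ S' b := by
      simpa only [hS'_tight] using tightStart_add_le_of_lt ω p hab
    have hmono : Δ a ≤ Δ b := by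
      rw [hΔ_sup, hΔ_sup]
      exact max_le_max le_rfl (prefixSup_mono ω g hab.le)
    have := hS a
    have := hS b
    omega

/-- Pushing back the tight schedule `S̃` (jobs ordered by injective priorities
`ω`) by the pushback amounts `Δ j = max(0, max_{ω j' ≤ ω j} (r j' - S̃ j'))`
yields a schedule `S j = S̃ j + Δ j` feasible for `(p, r)`. -/
theorem pushback_schedule_feasible {n : ℕ} (hn : 1 ≤ n) (p r : Fin n → ℕ)
    (hp : ∀ j, 0 < p j) (ω : Fin n → ℝ) (hω : Function.Injective ω)
    (S' : Fin n → ℕ) (Δ : Fin n → ℤ) (S : Fin n → ℕ)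
    (hS' : ∀ j, S' j =
      ∑ j' ∈ Finset.univ.filter (fun j' => j' ≠ j ∧ ω j' < ω j), p j')
    (hΔ : ∀ j, Δ j = max 0
      ((Finset.univ.filter (fun j' => ω j' ≤ ω j)).sup'
        ⟨j, Finset.mem_filter.mpr ⟨Finset.mem_univ j, le_refl (ω j)⟩⟩
        (fun j' => (r j' : ℤ) - (S' j' : ℤ))))
    (hS : ∀ j, (S j : ℤ) = (S' j : ℤ) + Δ j) :
    Feasible p r S :=
  pushback_schedule_feasible_general p r ω hω S' Δ S hS' hΔ hS
end
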